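/- Let I = [−1/2,1/2], Q = I × I, and let F : Q → Q be a Borel map of the form F(x,y) = (T(x), G(x,y)). Let μ be an F-invariant Borel probability measure on Q whose marginal μ_T on the first coordinate is T-invariant and absolutely continuous with respect to Lebesgue measure m on I. Fix α ∈ (0,1]. Assume: (1) there exist C₀ > 0 and Λ₀ ∈ (0,1) such that for every f ∈ BV_{1,α}, every bounded measurable g : I → ℝ and every n ≥ 1, | ∫ f·(g∘Tⁿ) dm − (∫ g dμ_T)(∫ f dm) | ≤ C₀ Λ₀ⁿ ‖g‖_∞ ‖f‖_{1,α}; (2) T is nonsingular with respect to m, and there is a finite collection of intervals I₁,…,I_m with ∪I_i = I such that T restricted to each I_i is a homeomorphism onto its image; (3) there is λ < 1 such that |G(x,y₁) − G(x,y₂)| ≤ λ|y₁ − y₂| for all x, y₁, y₂ ∈ I; (4) there exist C₁ > 0 and K > 0 such that for every f : Q → ℝ and every n ≥ 1, ‖π(f∘Fⁿ)‖_{1,α} + Var^□(f∘Fⁿ) ≤ C₁ Kⁿ ( ‖π(f)‖_{1,α} + ‖f‖_{y-Lip} + Var^□(f) ). Then F has exponential decay of correlations: there exist C₂ > 0 and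 Λ ∈ (0,1) such that for all f, g : Q → ℝ and all n ≥ 0, | ∫ f·(g∘Fⁿ) dμ − (∫ g dμ)(∫ f dμ) | ≤ C₂ Λⁿ ‖g‖_{y-Lip} ( ‖f‖_{y-Lip} + ‖π(f)‖_{1,α} + Var^□(f) ). -/

import Mathlib

/-!
Run the argument at an intermediate time `k ≈ β n`. Since `F` contracts the vertical fibres,
`f ∘ F^[k]` and `g ∘ F^[k]` differ by `O(λ^k)` from functions of the base point alone, namely
their values on the line `y = 0`. By invariance of `μ` the correlation thus becomes, up to
`O(λ^k)`, a correlation for `T` against `μ_T`, which hypothesis (1) with constant density moves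
to Lebesgue measure at cost `O(Λ₀^k)`. There the density is replaced by `π(f ∘ F^[2k])`, whose
`BV_{1,α}` norm grows at most like `K^(2k)` by (4), and (1) decorrelates it at time `n + k`
with error `O(Λ₀^n K^(2k))`. For `β` small all three errors decay exponentially in `n`.
-/

open MeasureTheory Set Filter Metric
open scoped ENNReal

noncomputable section

/-- The interval `I = [−1/2, 1/2]`. -/
def J : Set ℝ := Set.Icc (-(1/2) : ℝ) (1/2)

/-- The square `Q = I × I`. -/
def Sq : Set (ℝ × ℝ) := J ×ˢ J

/-- The essential oscillation of `h` over the `ε`-ball around `x`, intersected with `I`. -/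
def osc (h : ℝ → ℝ) (ε x : ℝ) : ℝ≥0∞ :=
  essSup (fun q : ℝ × ℝ => ENNReal.ofReal |h q.1 - h q.2|)
    ((volume.restrict (Metric.ball x ε ∩ J)).prod (volume.restrict (Metric.ball x ε ∩ J)))

/-- `osc_1(h,ε) = ∫_I osc(h,ε,x) dm(x)`. -/
def osc1 (h : ℝ → ℝ) (ε : ℝ) : ℝ≥0∞ := ∫⁻ x in J, osc h ε x

/-- `Var_{1,r}(h) = sup_{0 < ε ≤ 1} ε^{−r} osc_1(h,ε)` (cutoff `A = 1`). -/
def Var1 (r : ℝ) (h : ℝ → ℝ) : ℝ≥0∞ :=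
  ⨆ ε ∈ Set.Ioc (0 : ℝ) 1, ENNReal.ofReal (ε ^ (-r)) * osc1 h ε

/-- `‖h‖_{1,r} = Var_{1,r}(h) + ‖h‖_{L¹(m)}` (valued in `[0,∞]`). -/
def norm1E (r : ℝ) (h : ℝ → ℝ) : ℝ≥0∞ := Var1 r h + ∫⁻ x in J, ENNReal.ofReal |h x|

/-- `π(f)(x) = ∫_I f(x,t) dt`. -/
def piF (f : ℝ × ℝ → ℝ) : ℝ → ℝ := fun x => ∫ t in J, f (x, t)

/-- `‖g‖_sup = sup_{Q} |g|` (valued in `[0,∞]`). -/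
def supQ (g : ℝ × ℝ → ℝ) : ℝ≥0∞ := ⨆ p ∈ Sq, ENNReal.ofReal |g p|

/-- `Lip_y(g) = sup_{x, y₁ ≠ y₂} |g(x,y₂) − g(x,y₁)| / |y₂ − y₁|` (valued in `[0,∞]`). -/
def lipY (g : ℝ × ℝ → ℝ) : ℝ≥0∞ :=
  ⨆ x ∈ J, ⨆ y₁ ∈ J, ⨆ y₂ ∈ J,
    ENNReal.ofReal |g (x, y₁) - g (x, y₂)| / ENNReal.ofReal |y₁ - y₂|

/-- `‖g‖_{y-Lip} = ‖g‖_sup + Lip_y(g)`. -/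
def yLipNorm (g : ℝ × ℝ → ℝ) : ℝ≥0∞ := supQ g + lipY g

/-- The variation on the square:
`Var^□(f) = sup Σ |f(x_i,y_i) − f(x_{i+1},y_i)|` over all `n`, all monotone
`x₁ ≤ … ≤ x_n` in `I` and all `y₁, …, y_n ∈ I`. -/
def VarSq (f : ℝ × ℝ → ℝ) : ℝ≥0∞ :=
  ⨆ (n : ℕ) (u : Fin (n + 1) → ℝ) (_ : Monotone u) (_ : ∀ i, u i ∈ J)
    (y : Fin (n + 1) → ℝ) (_ : ∀ i, y i ∈ J),
    ENNReal.ofReal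
      (∑ i : Fin n, |f (u i.castSucc, y i.castSucc) - f (u i.succ, y i.castSucc)|)

open Topology

lemma measurableSet_J : MeasurableSet J := measurableSet_Icc

lemma volume_J : volume J = 1 := by
  rw [J, Real.volume_Icc]; norm_num

lemma zero_mem_J : (0 : ℝ) ∈ J := by
  constructor <;> norm_num

lemma abs_sub_le_one_of_mem_J {y y' : ℝ} (hy : y ∈ J) (hy' : y' ∈ J) : |y - y'| ≤ 1 := by
  rw [abs_le]; constructor <;> linarith [hy.1, hy.2, hy'.1, hy'.2]

instance : IsProbabilityMeasure (volume.restrict J) :=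
  ⟨by rw [Measure.restrict_apply_univ, volume_J]⟩

lemma abs_mul_le_mul_of_abs_le {a b A B : ℝ} (ha : |a| ≤ A) (hb : |b| ≤ B) : |a * b| ≤ A * B := by
  rw [abs_mul]; exact mul_le_mul ha hb (abs_nonneg _) ((abs_nonneg _).trans ha)

lemma abs_mul_sub_mul_le {a b c d ε δ A B : ℝ} (hac : |a - c| ≤ ε) (hbd : |b - d| ≤ δ)
    (hb : |b| ≤ B) (hc : |c| ≤ A) : |a * b - c * d| ≤ ε * B + A * δ := by
  calc |a * b - c * d| = |(a - c) * b + c * (b - d)| := by ring_nf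
    _ ≤ |(a - c) * b| + |c * (b - d)| := abs_add_le _ _
    _ ≤ ε * B + A * δ :=
      add_le_add (abs_mul_le_mul_of_abs_le hac hb) (abs_mul_le_mul_of_abs_le hc hbd)

lemma ENNReal.ofReal_le_ofReal_mul_mul {a c : ℝ} (hc : 0 < c) {x y : ℝ≥0∞}
    (hx : x = 0 → a ≤ 0) (hy : y = 0 → a ≤ 0)
    (h : x ≠ ⊤ → y ≠ ⊤ → a ≤ c * x.toReal * y.toReal) :
    ENNReal.ofReal a ≤ ENNReal.ofReal c * x * y := by
  rcases eq_or_ne x 0 with rfl | hx0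
  · simp [ENNReal.ofReal_eq_zero.mpr (hx rfl)]
  rcases eq_or_ne y 0 with rfl | hy0
  · simp [ENNReal.ofReal_eq_zero.mpr (hy rfl)]
  have hc0 : ENNReal.ofReal c ≠ 0 := by simpa using hc
  rcases eq_or_ne x ⊤ with rfl | hxt
  · simp [ENNReal.mul_top hc0, ENNReal.top_mul hy0]
  rcases eq_or_ne y ⊤ with rfl | hyt
  · simp [ENNReal.mul_top (mul_ne_zero hc0 hx0)]
  calc ENNReal.ofReal a ≤ ENNReal.ofReal (c * x.toReal * y.toReal) :=
        ENNReal.ofReal_le_ofReal (h hxt hyt)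
    _ = ENNReal.ofReal c * x * y := by
      rw [ENNReal.ofReal_mul (by positivity), ENNReal.ofReal_mul hc.le,
        ENNReal.ofReal_toReal hxt, ENNReal.ofReal_toReal hyt]

lemma exists_balanced_time {ρ Λ₀ K : ℝ} (hρ : ρ ∈ Ioo 0 1) (hΛ₀ : Λ₀ ∈ Ioo 0 1) (hK : 0 ≤ K) :
    ∃ C > 0, ∃ Λ ∈ Ioo 0 1, ∀ n : ℕ, ∃ k, 1 ≤ k ∧ ρ ^ k ≤ C * Λ ^ n ∧
      Λ₀ ^ (n + k) * K ^ (k + k) ≤ C * Λ ^ n := by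
  obtain ⟨hρ0, hρ1⟩ := hρ
  obtain ⟨hΛ₀0, hΛ₀1⟩ := hΛ₀
  set K' := max K 1
  have hK' : 1 ≤ K' := le_max_right _ _
  set σ := √Λ₀
  have hσ0 : 0 < σ := Real.sqrt_pos.2 hΛ₀0
  have hσ1 : σ < 1 := (Real.sqrt_lt' one_pos).2 (by linarith)
  -- `k ≈ β n`, with `β` so small that `Λ₀ ^ n` beats the growth `K' ^ (2 k)`
  have hlim : Tendsto (fun β : ℝ => σ * K' ^ (2 * β)) (𝓝[>] 0) (𝓝 σ) := by
    have hcont : Continuous fun β : ℝ => σ * K' ^ (2 * β) :=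
      continuous_const.mul (Real.continuous_const_rpow (by positivity) |>.comp (by fun_prop))
    simpa using (hcont.tendsto 0).mono_left nhdsWithin_le_nhds
  obtain ⟨β, hβK, hβ0 : 0 < β⟩ :=
    ((hlim.eventually (gt_mem_nhds hσ1)).and self_mem_nhdsWithin).exists
  refine ⟨K' ^ 4, by positivity, max (ρ ^ β) σ,
    ⟨lt_max_of_lt_right hσ0, max_lt (Real.rpow_lt_one hρ0.le hρ1 hβ0) hσ1⟩, fun n => ?_⟩
  set k := ⌈β * n⌉₊ + 1
  have hk1 : β * n ≤ k := (Nat.le_ceil _).trans (by simp [k])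
  have hk2 : (k : ℝ) ≤ β * n + 2 := by
    have := Nat.ceil_lt_add_one (mul_nonneg hβ0.le (Nat.cast_nonneg n))
    simp only [k, Nat.cast_add, Nat.cast_one]; linarith
  refine ⟨k, by omega, ?_, ?_⟩
  · calc ρ ^ k = ρ ^ (k : ℝ) := (Real.rpow_natCast ρ k).symm
      _ ≤ ρ ^ (β * n) := Real.rpow_le_rpow_of_exponent_ge hρ0 hρ1.le hk1
      _ = (ρ ^ β) ^ n := Real.rpow_mul_natCast hρ0.le β n
      _ ≤ max (ρ ^ β) σ ^ n := by gcongr; exact le_max_left _ _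
      _ ≤ K' ^ 4 * max (ρ ^ β) σ ^ n := le_mul_of_one_le_left (by positivity) (one_le_pow₀ hK')
  · calc Λ₀ ^ (n + k) * K ^ (k + k) ≤ Λ₀ ^ n * K' ^ ((k + k : ℕ) : ℝ) := by
          rw [Real.rpow_natCast]
          exact mul_le_mul (pow_le_pow_of_le_one hΛ₀0.le hΛ₀1.le (Nat.le_add_right n k))
            (pow_le_pow_left₀ hK (le_max_left _ _) _) (by positivity) (by positivity)
      _ ≤ Λ₀ ^ n * K' ^ (2 * (β * n + 2)) := by
          gcongr
          push_cast; linarith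
      _ = K' ^ 4 * (σ * (σ * K' ^ (2 * β))) ^ n := by
          rw [show 2 * (β * n + 2) = 2 * β * n + (4 : ℕ) by push_cast; ring,
            Real.rpow_add (by positivity), Real.rpow_mul_natCast (by positivity),
            Real.rpow_natCast, ← mul_assoc, ← Real.mul_self_sqrt hΛ₀0.le]
          ring
      _ ≤ K' ^ 4 * max (ρ ^ β) σ ^ n := by
          gcongr
          calc σ * (σ * K' ^ (2 * β)) ≤ σ * 1 := by gcongr
            _ ≤ max (ρ ^ β) σ := by rw [mul_one]; exact le_max_right _ _

section Integrals

variable {Ω : Type*} [MeasurableSpace Ω] {ν : Measure Ω}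

lemma integrable_of_ae_mem_of_abs_le [IsFiniteMeasure ν] {s : Set Ω} (hs : ∀ᵐ x ∂ν, x ∈ s)
    {φ : Ω → ℝ} (hφ : Measurable φ) {C : ℝ} (hC : ∀ x ∈ s, |φ x| ≤ C) : Integrable φ ν :=
  Integrable.of_bound hφ.aestronglyMeasurable C (hs.mono fun x hx => hC x hx)

lemma abs_integral_le_of_ae [IsProbabilityMeasure ν] {φ : Ω → ℝ} {C : ℝ}
    (h : ∀ᵐ x ∂ν, |φ x| ≤ C) : |∫ x, φ x ∂ν| ≤ C := by
  simpa using norm_integral_le_of_norm_le_const (μ := ν) (f := φ) (by simpa using h)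

lemma abs_integral_sub_le_of_ae [IsProbabilityMeasure ν] {φ ψ : Ω → ℝ} (hφ : Integrable φ ν)
    (hψ : Integrable ψ ν) {ε : ℝ} (h : ∀ᵐ x ∂ν, |φ x - ψ x| ≤ ε) :
    |(∫ x, φ x ∂ν) - ∫ x, ψ x ∂ν| ≤ ε := by
  rw [← integral_sub hφ hψ]
  exact abs_integral_le_of_ae h

lemma MeasureTheory.MeasurePreserving.integral_comp_iterate {F : Ω → Ω}
    (hF : MeasurePreserving F ν ν) {φ : Ω → ℝ} (hφ : Measurable φ) (k : ℕ) :
    ∫ p, φ (F^[k] p) ∂ν = ∫ p, φ p ∂ν := by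
  rw [← integral_map (hF.iterate k).measurable.aemeasurable hφ.aestronglyMeasurable,
    (hF.iterate k).map_eq]

end Integrals

lemma abs_integral_sub_integral_map_fst_le {α β : Type*} [MeasurableSpace α] [MeasurableSpace β]
    {μ : Measure (α × β)} [IsProbabilityMeasure μ] {s : Set (α × β)} (hs : ∀ᵐ p ∂μ, p ∈ s)
    {Φ : α × β → ℝ} {Ψ : α → ℝ} (hΦ : Integrable Φ μ) (hΨ : Measurable Ψ) {C : ℝ}
    (hΨC : ∀ x, |Ψ x| ≤ C) {ε : ℝ} (h : ∀ p ∈ s, |Φ p - Ψ p.1| ≤ ε) :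
    |(∫ p, Φ p ∂μ) - ∫ x, Ψ x ∂μ.map Prod.fst| ≤ ε := by
  rw [integral_map measurable_fst.aemeasurable hΨ.aestronglyMeasurable]
  exact abs_integral_sub_le_of_ae hΦ
    (integrable_of_ae_mem_of_abs_le (s := univ) (ae_of_all _ fun _ => mem_univ _)
      (hΨ.comp measurable_fst) fun p _ => hΨC p.1) (hs.mono h)

lemma abs_le_toReal_supQ {φ : ℝ × ℝ → ℝ} (h : supQ φ ≠ ⊤) {p : ℝ × ℝ} (hp : p ∈ Sq) :
    |φ p| ≤ (supQ φ).toReal :=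
  (ENNReal.ofReal_le_iff_le_toReal h).mp (le_iSup₂ (f := fun p _ => ENNReal.ofReal |φ p|) p hp)

lemma eq_zero_of_supQ_eq_zero {φ : ℝ × ℝ → ℝ} (h : supQ φ = 0) {p : ℝ × ℝ} (hp : p ∈ Sq) :
    φ p = 0 := by
  have := abs_le_toReal_supQ (h ▸ ENNReal.zero_ne_top) hp
  rw [h, ENNReal.toReal_zero] at this
  exact abs_nonpos_iff.mp this

def FiberLipschitz (L : ℝ) (φ : ℝ × ℝ → ℝ) : Prop :=
  ∀ x ∈ J, ∀ y₁ ∈ J, ∀ y₂ ∈ J, |φ (x, y₁) - φ (x, y₂)| ≤ L * |y₁ - y₂|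

lemma FiberLipschitz.nonneg {L : ℝ} {φ : ℝ × ℝ → ℝ} (h : FiberLipschitz L φ) : 0 ≤ L := by
  have hJ : (1 / 2 : ℝ) ∈ J ∧ (-(1 / 2) : ℝ) ∈ J := by constructor <;> constructor <;> norm_num
  have := h 0 zero_mem_J _ hJ.1 _ hJ.2
  norm_num at this
  linarith [abs_nonneg (φ (0, 1 / 2) - φ (0, -(1 / 2)))]

lemma fiberLipschitz_toReal_lipY {φ : ℝ × ℝ → ℝ} (h : lipY φ ≠ ⊤) :
    FiberLipschitz (lipY φ).toReal φ := by
  intro x hx y₁ hy₁ y₂ hy₂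
  rcases eq_or_ne y₁ y₂ with rfl | hne
  · simp
  have hpos : 0 < |y₁ - y₂| := abs_pos.mpr (sub_ne_zero.mpr hne)
  have hquot : ENNReal.ofReal |φ (x, y₁) - φ (x, y₂)| / ENNReal.ofReal |y₁ - y₂| ≤ lipY φ :=
    le_iSup₂_of_le x hx <| le_iSup₂_of_le y₁ hy₁ <| le_iSup₂_of_le y₂ hy₂ le_rfl
  rw [ENNReal.div_le_iff (by simpa using hpos) ENNReal.ofReal_ne_top,
    ← ENNReal.ofReal_toReal h, ← ENNReal.ofReal_mul ENNReal.toReal_nonneg] at hquot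
  exact (ENNReal.ofReal_le_ofReal_iff (by positivity)).mp hquot

lemma norm1E_one (r : ℝ) : norm1E r (fun _ => 1) = 1 := by
  have hosc : ∀ ε x, osc (fun _ => (1 : ℝ)) ε x = 0 := fun ε x => by
    simpa [osc] using essSup_const_bot (β := ℝ≥0∞)
  simp [norm1E, Var1, osc1, hosc]

lemma measurable_piF {φ : ℝ × ℝ → ℝ} (hφ : Measurable φ) : Measurable (piF φ) :=
  (hφ.stronglyMeasurable.integral_prod_right' (ν := volume.restrict J)).measurable

lemma abs_piF_le {φ : ℝ × ℝ → ℝ} {S : ℝ} (hφS : ∀ p ∈ Sq, |φ p| ≤ S) {x : ℝ} (hx : x ∈ J) :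
    |piF φ x| ≤ S :=
  abs_integral_le_of_ae <|
    (ae_restrict_iff' measurableSet_J).2 (ae_of_all _ fun _ ht => hφS _ ⟨hx, ht⟩)

/-- Hypothesis (1), with equilibrium state `ν`. -/
def ExpMixing (T : ℝ → ℝ) (ν : Measure ℝ) (α C₀ Λ₀ : ℝ) : Prop :=
  ∀ f g : ℝ → ℝ, ∀ Kg : ℝ, Measurable f → Var1 α f < ⊤ → Measurable g → (∀ x, |g x| ≤ Kg) →
    ∀ n : ℕ, 1 ≤ n →
      ENNReal.ofReal |(∫ x in J, f x * g (T^[n] x)) - (∫ x, g x ∂ν) * ∫ x in J, f x|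
        ≤ ENNReal.ofReal (C₀ * Λ₀ ^ n * Kg) * norm1E α f

namespace ExpMixing

variable {T : ℝ → ℝ} {ν : Measure ℝ} {α C₀ Λ₀ : ℝ}

lemma abs_sub_le (h : ExpMixing T ν α C₀ Λ₀) (hC₀ : 0 ≤ C₀) (hΛ₀ : 0 ≤ Λ₀) {f g : ℝ → ℝ}
    (hf : Measurable f) (hfn : norm1E α f ≠ ⊤) (hg : Measurable g) {K : ℝ}
    (hgK : ∀ x, |g x| ≤ K) {n : ℕ} (hn : 1 ≤ n) :
    |(∫ x in J, f x * g (T^[n] x)) - (∫ x, g x ∂ν) * ∫ x in J, f x|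
      ≤ C₀ * Λ₀ ^ n * K * (norm1E α f).toReal := by
  have hK : 0 ≤ K := (abs_nonneg _).trans (hgK 0)
  have hvar : Var1 α f < ⊤ := lt_of_le_of_lt le_self_add hfn.lt_top
  have := h f g K hf hvar hg hgK n hn
  rw [← ENNReal.ofReal_toReal hfn, ← ENNReal.ofReal_mul (by positivity)] at this
  exact (ENNReal.ofReal_le_ofReal_iff (by positivity)).mp this

lemma abs_setIntegral_comp_sub_le (h : ExpMixing T ν α C₀ Λ₀) (hC₀ : 0 ≤ C₀) (hΛ₀ : 0 ≤ Λ₀)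
    {g : ℝ → ℝ} (hg : Measurable g) {K : ℝ} (hgK : ∀ x, |g x| ≤ K) {n : ℕ} (hn : 1 ≤ n) :
    |(∫ x in J, g (T^[n] x)) - ∫ x, g x ∂ν| ≤ C₀ * Λ₀ ^ n * K := by
  simpa [norm1E_one] using
    h.abs_sub_le hC₀ hΛ₀ (f := fun _ => 1) measurable_const (by simp [norm1E_one]) hg hgK hn

end ExpMixing

section SkewProduct

variable {T : ℝ → ℝ} {G : ℝ × ℝ → ℝ} {F : ℝ × ℝ → ℝ × ℝ} {l : ℝ}

lemma fst_iterate_apply (hF : ∀ p, F p = (T p.1, G p)) (k : ℕ) (p : ℝ × ℝ) :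
    (F^[k] p).1 = T^[k] p.1 :=
  Function.Semiconj.iterate_right (f := Prod.fst) (fun p => by rw [hF]) k p

lemma measurable_of_skew (hF : ∀ p, F p = (T p.1, G p)) (hFm : Measurable F) : Measurable T := by
  have : T = fun x => (F (x, 0)).1 := funext fun x => by rw [hF]
  rw [this]
  exact measurable_fst.comp (hFm.comp (measurable_id.prodMk measurable_const))

lemma abs_snd_iterate_sub_le (hF : ∀ p, F p = (T p.1, G p)) (hFQ : MapsTo F Sq Sq)
    (hG : FiberLipschitz l G) (k : ℕ) {x y y' : ℝ} (hy : (x, y) ∈ Sq) (hy' : (x, y') ∈ Sq) :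
    |(F^[k] (x, y)).2 - (F^[k] (x, y')).2| ≤ l ^ k * |y - y'| := by
  induction k generalizing x y y' with
  | zero => simp
  | succ k ih =>
    have hFy := hF (x, y)
    have hFy' := hF (x, y')
    rw [Function.iterate_succ_apply, Function.iterate_succ_apply, hFy, hFy']
    calc _ ≤ l ^ k * |G (x, y) - G (x, y')| := ih (hFy ▸ hFQ hy) (hFy' ▸ hFQ hy')
      _ ≤ l ^ k * (l * |y - y'|) := by
        have := hG.nonneg
        gcongr
        exact hG x hy.1 y hy.2 y' hy'.2
      _ = l ^ (k + 1) * |y - y'| := by ring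

lemma abs_comp_iterate_sub_le (hF : ∀ p, F p = (T p.1, G p)) (hFQ : MapsTo F Sq Sq)
    (hG : FiberLipschitz l G) {L : ℝ} {φ : ℝ × ℝ → ℝ} (hφ : FiberLipschitz L φ) (k : ℕ)
    {x y y' : ℝ} (hy : (x, y) ∈ Sq) (hy' : (x, y') ∈ Sq) :
    |φ (F^[k] (x, y)) - φ (F^[k] (x, y'))| ≤ L * l ^ k := by
  have hfst : (F^[k] (x, y')).1 = (F^[k] (x, y)).1 := by
    rw [fst_iterate_apply hF, fst_iterate_apply hF]
  have hmem := hFQ.iterate k hy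
  have hmem' := hFQ.iterate k hy'
  have hL := hφ.nonneg
  have hl := hG.nonneg
  calc |φ (F^[k] (x, y)) - φ (F^[k] (x, y'))|
      ≤ L * |(F^[k] (x, y)).2 - (F^[k] (x, y')).2| := by
        rw [show F^[k] (x, y') = ((F^[k] (x, y)).1, (F^[k] (x, y')).2) from Prod.ext hfst rfl]
        exact hφ _ hmem.1 _ hmem.2 _ hmem'.2
    _ ≤ L * (l ^ k * 1) := by
      gcongr
      exact (abs_snd_iterate_sub_le hF hFQ hG k hy hy').trans
        (by gcongr; exact abs_sub_le_one_of_mem_J hy.2 hy'.2)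
    _ = L * l ^ k := by ring

/-- The indicator makes it bounded on all of `ℝ`, as (1) requires of its test functions. -/
def flatten (F : ℝ × ℝ → ℝ × ℝ) (k : ℕ) (φ : ℝ × ℝ → ℝ) : ℝ → ℝ :=
  J.indicator fun x => φ (F^[k] (x, 0))

lemma measurable_flatten (hFm : Measurable F) {φ : ℝ × ℝ → ℝ} (hφ : Measurable φ) (k : ℕ) :
    Measurable (flatten F k φ) :=
  (hφ.comp ((hFm.iterate k).comp (measurable_id.prodMk measurable_const))).indicator
    measurableSet_J

lemma abs_flatten_le (hFQ : MapsTo F Sq Sq) {φ : ℝ × ℝ → ℝ} {S : ℝ}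
    (hφS : ∀ p ∈ Sq, |φ p| ≤ S) (k : ℕ) (x : ℝ) : |flatten F k φ x| ≤ S := by
  by_cases hx : x ∈ J
  · rw [flatten, indicator_of_mem hx]
    exact hφS _ (hFQ.iterate k ⟨hx, zero_mem_J⟩)
  · rw [flatten, indicator_of_notMem hx, abs_zero]
    exact (abs_nonneg _).trans (hφS (0, 0) ⟨zero_mem_J, zero_mem_J⟩)

lemma abs_comp_iterate_sub_flatten_le (hF : ∀ p, F p = (T p.1, G p)) (hFQ : MapsTo F Sq Sq)
    (hG : FiberLipschitz l G) {L : ℝ} {φ : ℝ × ℝ → ℝ} (hφ : FiberLipschitz L φ) (k : ℕ)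
    {p : ℝ × ℝ} (hp : p ∈ Sq) : |φ (F^[k] p) - flatten F k φ p.1| ≤ L * l ^ k := by
  rw [flatten, indicator_of_mem hp.1]
  exact abs_comp_iterate_sub_le hF hFQ hG hφ k hp ⟨hp.1, zero_mem_J⟩

lemma abs_piF_comp_iterate_sub_flatten_le (hF : ∀ p, F p = (T p.1, G p))
    (hFQ : MapsTo F Sq Sq) (hFm : Measurable F) (hG : FiberLipschitz l G) {L S : ℝ}
    {φ : ℝ × ℝ → ℝ} (hφm : Measurable φ) (hφS : ∀ p ∈ Sq, |φ p| ≤ S) (hφ : FiberLipschitz L φ)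
    (k : ℕ) {x : ℝ} (hx : x ∈ J) :
    |piF (φ ∘ F^[k + k]) x - flatten F k φ (T^[k] x)| ≤ L * l ^ k := by
  have hae : ∀ᵐ t ∂volume.restrict J, t ∈ J := ae_restrict_mem measurableSet_J
  have hint : Integrable (fun t => φ (F^[k + k] (x, t))) (volume.restrict J) :=
    integrable_of_ae_mem_of_abs_le hae
      (hφm.comp ((hFm.iterate _).comp (measurable_const.prodMk measurable_id)))
      fun t ht => hφS _ (hFQ.iterate _ ⟨hx, ht⟩)
  have hclose : ∀ t ∈ J, |φ (F^[k + k] (x, t)) - flatten F k φ (T^[k] x)| ≤ L * l ^ k := by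
    intro t ht
    rw [Function.iterate_add_apply, ← fst_iterate_apply hF k (x, t)]
    exact abs_comp_iterate_sub_flatten_le hF hFQ hG hφ k (hFQ.iterate k ⟨hx, ht⟩)
  simpa [piF] using abs_integral_sub_le_of_ae hint (integrable_const _) (hae.mono hclose)

lemma abs_setIntegral_piF_mul_sub_le (hF : ∀ p, F p = (T p.1, G p)) (hFQ : MapsTo F Sq Sq)
    (hFm : Measurable F) (hG : FiberLipschitz l G) {f : ℝ × ℝ → ℝ} (hfm : Measurable f)
    {Sf Lf : ℝ} (hfS : ∀ p ∈ Sq, |f p| ≤ Sf) (hfL : FiberLipschitz Lf f) {h : ℝ → ℝ}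
    (hhm : Measurable h) {B : ℝ} (hhB : ∀ x, |h x| ≤ B) (k : ℕ) :
    |(∫ x in J, piF (f ∘ F^[k + k]) x * h x) - ∫ x in J, flatten F k f (T^[k] x) * h x|
      ≤ Lf * l ^ k * B := by
  have hJ : ∀ᵐ x ∂volume.restrict J, x ∈ J := ae_restrict_mem measurableSet_J
  have hqS : ∀ p ∈ Sq, |(f ∘ F^[k + k]) p| ≤ Sf := fun p hp => hfS _ (hFQ.iterate _ hp)
  refine abs_integral_sub_le_of_ae
    (integrable_of_ae_mem_of_abs_le hJ ((measurable_piF (hfm.comp (hFm.iterate _))).mul hhm)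
      fun x hx => abs_mul_le_mul_of_abs_le (abs_piF_le hqS hx) (hhB x))
    (integrable_of_ae_mem_of_abs_le hJ (((measurable_flatten hFm hfm k).comp
      ((measurable_of_skew hF hFm).iterate k)).mul hhm)
      fun x _ => abs_mul_le_mul_of_abs_le (abs_flatten_le hFQ hfS k _) (hhB x))
    (hJ.mono fun x hx => ?_)
  simp only [Pi.mul_apply, Function.comp_apply, ← sub_mul]
  exact abs_mul_le_mul_of_abs_le
    (abs_piF_comp_iterate_sub_flatten_le hF hFQ hFm hG hfm hfS hfL k hx) (hhB x)

lemma correlation_eq_zero_of_supQ_eq_zero {μ : Measure (ℝ × ℝ)} (hFQ : MapsTo F Sq Sq)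
    (hae : ∀ᵐ p ∂μ, p ∈ Sq) {f g : ℝ × ℝ → ℝ} (h : supQ f = 0 ∨ supQ g = 0) (n : ℕ) :
    (∫ p, f p * g (F^[n] p) ∂μ) - (∫ p, g p ∂μ) * ∫ p, f p ∂μ = 0 := by
  rcases h with hf | hg
  · have hf0 : ∀ᵐ p ∂μ, f p = 0 := hae.mono fun p hp => eq_zero_of_supQ_eq_zero hf hp
    rw [integral_eq_zero_of_ae (hf0.mono fun p hp => by simp [hp]),
      integral_eq_zero_of_ae hf0]
    simp
  · have hg0 : ∀ᵐ p ∂μ, g p = 0 := hae.mono fun p hp => eq_zero_of_supQ_eq_zero hg hp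
    rw [integral_eq_zero_of_ae (hae.mono fun p hp => by
        simp [eq_zero_of_supQ_eq_zero hg (hFQ.iterate n hp)]),
      integral_eq_zero_of_ae hg0]
    simp

end SkewProduct

section Correlations

variable {T : ℝ → ℝ} {G : ℝ × ℝ → ℝ} {F : ℝ × ℝ → ℝ × ℝ} {l : ℝ}
  {μ : Measure (ℝ × ℝ)} [IsProbabilityMeasure μ]

lemma abs_integral_flatten_sub_le (hF : ∀ p, F p = (T p.1, G p)) (hFQ : MapsTo F Sq Sq)
    (hmp : MeasurePreserving F μ μ) (hae : ∀ᵐ p ∂μ, p ∈ Sq) (hG : FiberLipschitz l G)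
    {L S : ℝ} {φ : ℝ × ℝ → ℝ} (hφm : Measurable φ) (hφS : ∀ p ∈ Sq, |φ p| ≤ S)
    (hφ : FiberLipschitz L φ) (k : ℕ) :
    |(∫ x, flatten F k φ x ∂μ.map Prod.fst) - ∫ p, φ p ∂μ| ≤ L * l ^ k := by
  rw [← hmp.integral_comp_iterate hφm k, abs_sub_comm]
  exact abs_integral_sub_integral_map_fst_le hae
    (integrable_of_ae_mem_of_abs_le hae (hφm.comp (hmp.measurable.iterate k))
      fun p hp => hφS _ (hFQ.iterate k hp))
    (measurable_flatten hmp.measurable hφm k) (abs_flatten_le hFQ hφS k)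
    fun p hp => abs_comp_iterate_sub_flatten_le hF hFQ hG hφ k hp

lemma abs_integral_mul_comp_iterate_sub_flatten_le (hF : ∀ p, F p = (T p.1, G p))
    (hFQ : MapsTo F Sq Sq) (hmp : MeasurePreserving F μ μ) (hae : ∀ᵐ p ∂μ, p ∈ Sq)
    (hG : FiberLipschitz l G) {f g : ℝ × ℝ → ℝ} (hfm : Measurable f) (hgm : Measurable g)
    {Sf Sg Lf Lg : ℝ} (hfS : ∀ p ∈ Sq, |f p| ≤ Sf) (hgS : ∀ p ∈ Sq, |g p| ≤ Sg)
    (hfL : FiberLipschitz Lf f) (hgL : FiberLipschitz Lg g) (k n : ℕ) :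
    |(∫ p, f p * g (F^[n] p) ∂μ) -
        ∫ x, flatten F k f x * flatten F k g (T^[n] x) ∂μ.map Prod.fst|
      ≤ Lf * l ^ k * Sg + Sf * (Lg * l ^ k) := by
  have hFm := hmp.measurable
  rw [← hmp.integral_comp_iterate (φ := fun p => f p * g (F^[n] p))
    (hfm.mul (hgm.comp (hFm.iterate n))) k]
  simp only [(Function.Commute.iterate_iterate_self F n k).eq]
  refine abs_integral_sub_integral_map_fst_le hae
    (integrable_of_ae_mem_of_abs_le hae ((hfm.comp (hFm.iterate k)).mul
        (hgm.comp ((hFm.iterate k).comp (hFm.iterate n)))) fun p hp =>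
      abs_mul_le_mul_of_abs_le (hfS _ (hFQ.iterate k hp))
        (hgS _ (hFQ.iterate k (hFQ.iterate n hp))))
    ((measurable_flatten hFm hfm k).mul
      ((measurable_flatten hFm hgm k).comp ((measurable_of_skew hF hFm).iterate n)))
    (fun x => abs_mul_le_mul_of_abs_le (abs_flatten_le hFQ hfS k x) (abs_flatten_le hFQ hgS k _))
    fun p hp => abs_mul_sub_mul_le (abs_comp_iterate_sub_flatten_le hF hFQ hG hfL k hp) ?_
      (hgS _ (hFQ.iterate k (hFQ.iterate n hp))) (abs_flatten_le hFQ hfS k _)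
  simp only [Function.comp_apply, ← fst_iterate_apply hF n p]
  exact abs_comp_iterate_sub_flatten_le hF hFQ hG hgL k (hFQ.iterate n hp)

lemma abs_setIntegral_piF_sub_integral_le (hF : ∀ p, F p = (T p.1, G p))
    (hFQ : MapsTo F Sq Sq) (hmp : MeasurePreserving F μ μ) (hae : ∀ᵐ p ∂μ, p ∈ Sq)
    (hG : FiberLipschitz l G) {α C₀ Λ₀ : ℝ} (hT : ExpMixing T (μ.map Prod.fst) α C₀ Λ₀)
    (hC₀ : 0 ≤ C₀) (hΛ₀ : 0 ≤ Λ₀) {f : ℝ × ℝ → ℝ} (hfm : Measurable f) {Sf Lf : ℝ}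
    (hfS : ∀ p ∈ Sq, |f p| ≤ Sf) (hfL : FiberLipschitz Lf f) {k : ℕ} (hk : 1 ≤ k) :
    |(∫ x in J, piF (f ∘ F^[k + k]) x) - ∫ p, f p ∂μ| ≤ 2 * Lf * l ^ k + C₀ * Λ₀ ^ k * Sf := by
  have hpiF := abs_setIntegral_piF_mul_sub_le hF hFQ hmp.measurable hG hfm hfS hfL
    (h := fun _ => 1) measurable_const (fun _ => abs_one.le) k
  have hleb := hT.abs_setIntegral_comp_sub_le hC₀ hΛ₀ (measurable_flatten hmp.measurable hfm k)
    (abs_flatten_le hFQ hfS k) hk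
  have hflat := abs_integral_flatten_sub_le hF hFQ hmp hae hG hfm hfS hfL k
  simp only [mul_one] at hpiF
  linarith [abs_sub_le (∫ x in J, piF (f ∘ F^[k + k]) x) (∫ x in J, flatten F k f (T^[k] x))
    (∫ p, f p ∂μ), abs_sub_le (∫ x in J, flatten F k f (T^[k] x))
    (∫ x, flatten F k f x ∂μ.map Prod.fst) (∫ p, f p ∂μ)]

lemma abs_correlation_le (hF : ∀ p, F p = (T p.1, G p)) (hFQ : MapsTo F Sq Sq)
    (hmp : MeasurePreserving F μ μ) (hae : ∀ᵐ p ∂μ, p ∈ Sq) (hG : FiberLipschitz l G)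
    {α C₀ Λ₀ : ℝ} (hT : ExpMixing T (μ.map Prod.fst) α C₀ Λ₀) (hC₀ : 0 ≤ C₀) (hΛ₀ : 0 ≤ Λ₀)
    {f g : ℝ × ℝ → ℝ} (hfm : Measurable f) (hgm : Measurable g) {Sf Sg Lf Lg : ℝ}
    (hfS : ∀ p ∈ Sq, |f p| ≤ Sf) (hgS : ∀ p ∈ Sq, |g p| ≤ Sg)
    (hfL : FiberLipschitz Lf f) (hgL : FiberLipschitz Lg g) {k : ℕ} (hk : 1 ≤ k) (n : ℕ)
    (hnorm : norm1E α (piF (f ∘ F^[k + k])) ≠ ⊤) :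
    |(∫ p, f p * g (F^[n] p) ∂μ) - (∫ p, g p ∂μ) * ∫ p, f p ∂μ|
      ≤ (Sf + Lf) * (Sg + Lg) * (4 * l ^ k + 2 * C₀ * Λ₀ ^ k)
        + C₀ * Λ₀ ^ (n + k) * Sg * (norm1E α (piF (f ∘ F^[k + k]))).toReal := by
  have hFm := hmp.measurable
  have hTm := measurable_of_skew hF hFm
  have hgkm := measurable_flatten hFm hgm k
  have hgkS := abs_flatten_le hFQ hgS k
  have hflat := abs_integral_mul_comp_iterate_sub_flatten_le hF hFQ hmp hae hG hfm hgm
    hfS hgS hfL hgL k n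
  have hleb := hT.abs_setIntegral_comp_sub_le hC₀ hΛ₀
    (g := fun x => flatten F k f x * flatten F k g (T^[n] x))
    ((measurable_flatten hFm hfm k).mul (hgkm.comp (hTm.iterate n)))
    (fun x => abs_mul_le_mul_of_abs_le (abs_flatten_le hFQ hfS k x) (hgkS _)) hk
  have hpiF := abs_setIntegral_piF_mul_sub_le hF hFQ hFm hG hfm hfS hfL
    (hgkm.comp (hTm.iterate (n + k))) (fun x => hgkS _) k
  have hmix := hT.abs_sub_le hC₀ hΛ₀ (measurable_piF (hfm.comp (hFm.iterate _))) hnorm hgkm hgkS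
    (n := n + k) (by omega)
  have hprod := abs_mul_sub_mul_le (abs_integral_flatten_sub_le hF hFQ hmp hae hG hgm hgS hgL k)
    (abs_setIntegral_piF_sub_integral_le hF hFQ hmp hae hG hT hC₀ hΛ₀ hfm hfS hfL hk)
    (abs_integral_le_of_ae ((ae_restrict_iff' measurableSet_J).2 (ae_of_all _ fun x hx =>
      abs_piF_le (fun p hp => hfS _ (hFQ.iterate (k + k) hp)) hx)))
    (abs_integral_le_of_ae (hae.mono hgS))
  simp only [← Function.iterate_add_apply] at hleb
  simp only [Function.comp_apply] at hpiF
  rw [abs_sub_comm] at hleb hpiF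
  set A₀ := ∫ p, f p * g (F^[n] p) ∂μ
  set A₁ := ∫ x, flatten F k f x * flatten F k g (T^[n] x) ∂μ.map Prod.fst
  set A₂ := ∫ x in J, flatten F k f (T^[k] x) * flatten F k g (T^[n + k] x)
  set A₃ := ∫ x in J, piF (f ∘ F^[k + k]) x * flatten F k g (T^[n + k] x)
  set A₄ := (∫ x, flatten F k g x ∂μ.map Prod.fst) * ∫ x in J, piF (f ∘ F^[k + k]) x
  set B := (∫ p, g p ∂μ) * ∫ p, f p ∂μ
  have hSf : 0 ≤ Sf := (abs_nonneg _).trans (hfS (0, 0) ⟨zero_mem_J, zero_mem_J⟩)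
  have hSg : 0 ≤ Sg := (abs_nonneg _).trans (hgS (0, 0) ⟨zero_mem_J, zero_mem_J⟩)
  have hLf := hfL.nonneg
  have hLg := hgL.nonneg
  have hlk : 0 ≤ l ^ k := pow_nonneg hG.nonneg k
  have hΛk : 0 ≤ C₀ * Λ₀ ^ k := by positivity
  calc |A₀ - B| ≤ |A₀ - A₁| + |A₁ - A₂| + |A₂ - A₃| + |A₃ - A₄| + |A₄ - B| := by
        linarith [abs_sub_le A₀ A₁ B, abs_sub_le A₁ A₂ B, abs_sub_le A₂ A₃ B, abs_sub_le A₃ A₄ B]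
    _ ≤ _ := by
        linarith [mul_nonneg (mul_nonneg hSf hSg) hlk, mul_nonneg (mul_nonneg hSf hLg) hlk,
          mul_nonneg (mul_nonneg hLf hSg) hlk, mul_nonneg (mul_nonneg hLf hLg) hlk,
          mul_nonneg (mul_nonneg hSf hLg) hΛk, mul_nonneg (mul_nonneg hLf hSg) hΛk,
          mul_nonneg (mul_nonneg hLf hLg) hΛk]

lemma ofReal_abs_correlation_le (hF : ∀ p, F p = (T p.1, G p)) (hFQ : MapsTo F Sq Sq)
    (hmp : MeasurePreserving F μ μ) (hae : ∀ᵐ p ∂μ, p ∈ Sq) (hG : FiberLipschitz l G)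
    {α C₀ Λ₀ : ℝ} (hT : ExpMixing T (μ.map Prod.fst) α C₀ Λ₀) (hC₀ : 0 ≤ C₀) (hΛ₀ : 0 ≤ Λ₀)
    {f g : ℝ × ℝ → ℝ} (hfm : Measurable f) (hgm : Measurable g) {k : ℕ} (hk : 1 ≤ k) (n : ℕ)
    {P : ℝ} (hP : 0 ≤ P)
    (hgrowth : norm1E α (piF (f ∘ F^[k + k]))
      ≤ ENNReal.ofReal P * (yLipNorm f + norm1E α (piF f) + VarSq f))
    {c : ℝ} (hc0 : 0 < c) (hc : 4 * l ^ k + 2 * C₀ * Λ₀ ^ k + C₀ * Λ₀ ^ (n + k) * P ≤ c) :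
    ENNReal.ofReal |(∫ p, f p * g (F^[n] p) ∂μ) - (∫ p, g p ∂μ) * ∫ p, f p ∂μ|
      ≤ ENNReal.ofReal c * yLipNorm g * (yLipNorm f + norm1E α (piF f) + VarSq f) := by
  set Nf := yLipNorm f + norm1E α (piF f) + VarSq f
  refine ENNReal.ofReal_le_ofReal_mul_mul hc0
    (fun h => (abs_eq_zero.2 (correlation_eq_zero_of_supQ_eq_zero hFQ hae
      (.inr (add_eq_zero.1 h).1) n)).le)
    (fun h => (abs_eq_zero.2 (correlation_eq_zero_of_supQ_eq_zero hFQ hae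
      (.inl (add_eq_zero.1 (add_eq_zero.1 (add_eq_zero.1 h).1).1).1) n)).le) fun hg hf => ?_
  obtain ⟨hsg, hlg⟩ := ENNReal.add_ne_top.1 hg
  have hyf : yLipNorm f ≠ ⊤ := ne_top_of_le_ne_top hf (le_self_add.trans le_self_add)
  obtain ⟨hsf, hlf⟩ := ENNReal.add_ne_top.1 hyf
  have hNf : (supQ f).toReal + (lipY f).toReal ≤ Nf.toReal := by
    rw [← ENNReal.toReal_add hsf hlf]
    exact ENNReal.toReal_mono hf (le_self_add.trans le_self_add)
  have hnorm : (norm1E α (piF (f ∘ F^[k + k]))).toReal ≤ P * Nf.toReal := by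
    simpa [ENNReal.toReal_mul, ENNReal.toReal_ofReal hP] using
      ENNReal.toReal_mono (ENNReal.mul_ne_top ENNReal.ofReal_ne_top hf) hgrowth
  have hbound := abs_correlation_le hF hFQ hmp hae hG hT hC₀ hΛ₀ hfm hgm
    (fun p hp => abs_le_toReal_supQ hsf hp) (fun p hp => abs_le_toReal_supQ hsg hp)
    (fiberLipschitz_toReal_lipY hlf) (fiberLipschitz_toReal_lipY hlg) hk n
    (ne_top_of_le_ne_top (ENNReal.mul_ne_top ENNReal.ofReal_ne_top hf) hgrowth)
  have hl := hG.nonneg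
  have hSg : (supQ g).toReal ≤ (supQ g).toReal + (lipY g).toReal :=
    le_add_of_nonneg_right ENNReal.toReal_nonneg
  rw [yLipNorm, ENNReal.toReal_add hsg hlg]
  calc _ ≤ _ := hbound
    _ ≤ Nf.toReal * ((supQ g).toReal + (lipY g).toReal) * (4 * l ^ k + 2 * C₀ * Λ₀ ^ k)
          + C₀ * Λ₀ ^ (n + k) * ((supQ g).toReal + (lipY g).toReal) * (P * Nf.toReal) := by
      gcongr
    _ = ((supQ g).toReal + (lipY g).toReal) * Nf.toReal *
          (4 * l ^ k + 2 * C₀ * Λ₀ ^ k + C₀ * Λ₀ ^ (n + k) * P) := by ring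
    _ ≤ ((supQ g).toReal + (lipY g).toReal) * Nf.toReal * c := by gcongr
    _ = c * ((supQ g).toReal + (lipY g).toReal) * Nf.toReal := by ring

end Correlations

theorem skew_product_decay_of_correlations_general
    (T : ℝ → ℝ) (G : ℝ × ℝ → ℝ) (F : ℝ × ℝ → ℝ × ℝ)
    (hF : ∀ p, F p = (T p.1, G p)) (hFQ : Set.MapsTo F Sq Sq) (hFmeas : Measurable F)
    (μ : Measure (ℝ × ℝ)) [IsProbabilityMeasure μ] (hμQ : μ Sq = 1)
    (hinv : μ.map F = μ)
    (α : ℝ)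
    -- (1) exponential convergence to equilibrium of the base map
    (h1 : ∃ C₀ > (0 : ℝ), ∃ Λ₀ ∈ Set.Ioo (0 : ℝ) 1, ∀ f g : ℝ → ℝ, ∀ Kg : ℝ,
      Measurable f → Var1 α f < ⊤ → Measurable g → (∀ x, |g x| ≤ Kg) →
      ∀ n : ℕ, 1 ≤ n →
        ENNReal.ofReal |(∫ x in J, f x * g (T^[n] x)) -
            (∫ x, g x ∂(μ.map Prod.fst)) * ∫ x in J, f x|
          ≤ ENNReal.ofReal (C₀ * Λ₀ ^ n * Kg) * norm1E α f)
    -- (3) uniform contraction on vertical leaves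
    (lam : ℝ) (hlam : lam < 1)
    (h3 : ∀ x ∈ J, ∀ y₁ ∈ J, ∀ y₂ ∈ J, |G (x, y₁) - G (x, y₂)| ≤ lam * |y₁ - y₂|)
    -- (4) exponential bound on the norms of compositions
    (h4 : ∃ C₁ > (0 : ℝ), ∃ K > (0 : ℝ), ∀ f : ℝ × ℝ → ℝ, ∀ n : ℕ, 1 ≤ n →
      norm1E α (piF (f ∘ F^[n])) + VarSq (f ∘ F^[n])
        ≤ ENNReal.ofReal (C₁ * K ^ n) * (norm1E α (piF f) + yLipNorm f + VarSq f)) :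
    ∃ C₂ > (0 : ℝ), ∃ Λ ∈ Set.Ioo (0 : ℝ) 1, ∀ f g : ℝ × ℝ → ℝ,
      Measurable f → Measurable g → ∀ n : ℕ,
        ENNReal.ofReal |(∫ p, f p * g (F^[n] p) ∂μ) -
            (∫ p, g p ∂μ) * ∫ p, f p ∂μ|
          ≤ ENNReal.ofReal (C₂ * Λ ^ n) * yLipNorm g *
              (yLipNorm f + norm1E α (piF f) + VarSq f) := by
  obtain ⟨C₀, hC₀, Λ₀, hΛ₀, h1⟩ := h1
  obtain ⟨C₁, hC₁, K, hK, h4⟩ := h4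
  have hae : ∀ᵐ p ∂μ, p ∈ Sq :=
    (ae_mem_iff_measure_eq (s := Sq) (measurableSet_J.prod measurableSet_J).nullMeasurableSet).2
      (by rw [hμQ, measure_univ])
  have hlam0 : 0 ≤ lam := FiberLipschitz.nonneg h3
  obtain ⟨C, hC, Λ, ⟨hΛ0, hΛ1⟩, hrate⟩ := exists_balanced_time (ρ := max lam Λ₀)
    ⟨lt_max_of_lt_right hΛ₀.1, max_lt hlam hΛ₀.2⟩ hΛ₀ hK.le
  refine ⟨(4 + 2 * C₀ + C₀ * C₁) * C, by positivity, Λ, ⟨hΛ0, hΛ1⟩, fun f g hf hg n => ?_⟩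
  obtain ⟨k, hk, hρk, hKk⟩ := hrate n
  have hlk : lam ^ k ≤ C * Λ ^ n := (pow_le_pow_left₀ hlam0 (le_max_left _ _) k).trans hρk
  have hΛ₀k : Λ₀ ^ k ≤ C * Λ ^ n := (pow_le_pow_left₀ hΛ₀.1.le (le_max_right _ _) k).trans hρk
  refine ofReal_abs_correlation_le hF hFQ ⟨hFmeas, hinv⟩ hae h3 h1 hC₀.le hΛ₀.1.le hf hg hk n
    (P := C₁ * K ^ (k + k)) (by positivity) ?_ (by positivity) ?_
  · rw [add_comm (yLipNorm f)]
    exact le_self_add.trans (h4 f (k + k) (by omega))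
  · nlinarith [mul_le_mul_of_nonneg_left hKk (mul_nonneg hC₀.le hC₁.le)]

/-- Skew products `F(x,y) = (T(x), G(x,y))` with contracting fibers over a base with
exponential convergence to equilibrium have exponential decay of correlations, provided the
relevant norms grow at most exponentially under composition with `F`. -/
theorem skew_product_decay_of_correlations
    (T : ℝ → ℝ) (G : ℝ × ℝ → ℝ) (F : ℝ × ℝ → ℝ × ℝ)
    (hF : ∀ p, F p = (T p.1, G p)) (hFQ : Set.MapsTo F Sq Sq) (hFmeas : Measurable F)
    (μ : Measure (ℝ × ℝ)) [IsProbabilityMeasure μ] (hμQ : μ Sq = 1)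
    (hinv : μ.map F = μ)
    (hTinv : (μ.map Prod.fst).map T = μ.map Prod.fst)
    (hac : μ.map Prod.fst ≪ volume)
    (α : ℝ) (hα : α ∈ Set.Ioc (0 : ℝ) 1)
    -- (1) exponential convergence to equilibrium of the base map
    (h1 : ∃ C₀ > (0 : ℝ), ∃ Λ₀ ∈ Set.Ioo (0 : ℝ) 1, ∀ f g : ℝ → ℝ, ∀ Kg : ℝ,
      Measurable f → Var1 α f < ⊤ → Measurable g → (∀ x, |g x| ≤ Kg) →
      ∀ n : ℕ, 1 ≤ n →
        ENNReal.ofReal |(∫ x in J, f x * g (T^[n] x)) -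
            (∫ x, g x ∂(μ.map Prod.fst)) * ∫ x in J, f x|
          ≤ ENNReal.ofReal (C₀ * Λ₀ ^ n * Kg) * norm1E α f)
    -- (2) nonsingularity and piecewise monotonicity of the base map
    (h2a : ∀ A : Set ℝ, MeasurableSet A → volume A = 0 → volume (T ⁻¹' A ∩ J) = 0)
    (h2b : ∃ (k : ℕ) (a b : Fin k → ℝ),
      (⋃ i, Set.Icc (a i) (b i)) = J ∧
      ∀ i, ContinuousOn T (Set.Icc (a i) (b i)) ∧ Set.InjOn T (Set.Icc (a i) (b i)))
    -- (3) uniform contraction on vertical leaves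
    (lam : ℝ) (hlam : lam < 1)
    (h3 : ∀ x ∈ J, ∀ y₁ ∈ J, ∀ y₂ ∈ J, |G (x, y₁) - G (x, y₂)| ≤ lam * |y₁ - y₂|)
    -- (4) exponential bound on the norms of compositions
    (h4 : ∃ C₁ > (0 : ℝ), ∃ K > (0 : ℝ), ∀ f : ℝ × ℝ → ℝ, ∀ n : ℕ, 1 ≤ n →
      norm1E α (piF (f ∘ F^[n])) + VarSq (f ∘ F^[n])
        ≤ ENNReal.ofReal (C₁ * K ^ n) * (norm1E α (piF f) + yLipNorm f + VarSq f)) :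
    ∃ C₂ > (0 : ℝ), ∃ Λ ∈ Set.Ioo (0 : ℝ) 1, ∀ f g : ℝ × ℝ → ℝ,
      Measurable f → Measurable g → ∀ n : ℕ,
        ENNReal.ofReal |(∫ p, f p * g (F^[n] p) ∂μ) -
            (∫ p, g p ∂μ) * ∫ p, f p ∂μ|
          ≤ ENNReal.ofReal (C₂ * Λ ^ n) * yLipNorm g *
              (yLipNorm f + norm1E α (piF f) + VarSq f) :=
  skew_product_decay_of_correlations_general T G F hF hFQ hFmeas μ hμQ hinv α h1 lam hlam h3 h4
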